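/- Let W be a finite group of orthogonal reflections of ℝⁿ, Δ₊ a finite set of nonzero linear functionals such that for each λ ∈ Δ₊ the orthogonal reflection s_λ across the hyperplane λ⁻¹(0) satisfies ρ ∘ s_λ = ρ, where ρ : ℝⁿ → ℝ is a differentiable strictly convex function. Then for every x with λ(x) > 0 for all λ ∈ Δ₊ (i.e., x in the open chamber C), one has λ(∇ρ(x)) > 0 for all λ ∈ Δ₊; that is, ∇ρ maps C into C. -/

import Mathlib

local notation "⟪" x ", " y "⟫" => @inner ℝ _ _ x y

/-! Let `v = c • l` with `c = 2 ⟪l, x⟫ / ‖l‖²`, so that `s_l x = x - v`. Strict convexity gives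
`ρ (x - v) > ρ x - ⟪∇ρ x, v⟫`, and `ρ (x - v) = ρ x` by invariance, hence `c ⟪l, ∇ρ x⟫ > 0`; on
the chamber `c > 0`. -/

open Set

theorem StrictConvexOn.comp_affineMap_of_injective {𝕜 E F β : Type*} [Field 𝕜] [LinearOrder 𝕜]
    [IsStrictOrderedRing 𝕜] [AddCommGroup E] [Module 𝕜 E] [AddCommGroup F] [Module 𝕜 F]
    [AddCommMonoid β] [PartialOrder β] [SMul 𝕜 β] {f : F → β} {s : Set F} (g : E →ᵃ[𝕜] F)
    (hg : Function.Injective g) (hf : StrictConvexOn 𝕜 s f) :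
    StrictConvexOn 𝕜 (g ⁻¹' s) (f ∘ g) :=
  ⟨hf.1.affine_preimage g, fun x hx y hy hxy a b ha hb hab => by
    simpa only [Function.comp_apply, Convex.combo_affine_apply hab] using
      hf.2 hx hy (hg.ne hxy) ha hb hab⟩

theorem StrictConvexOn.add_fderiv_lt {E : Type*} [NormedAddCommGroup E] [NormedSpace ℝ E]
    {f : E → ℝ} {f' : E →L[ℝ] ℝ} {s : Set E} {x y : E} (hf : StrictConvexOn ℝ s f)
    (hx : x ∈ s) (hy : y ∈ s) (hxy : x ≠ y) (hf' : HasFDerivAt f f' x) :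
    f x + f' (y - x) < f y := by
  set L : ℝ →ᵃ[ℝ] E := AffineMap.lineMap x y
  have hline : StrictConvexOn ℝ (L ⁻¹' s) (f ∘ L) :=
    hf.comp_affineMap_of_injective L (AffineMap.lineMap_injective ℝ hxy)
  have hderiv : HasDerivAt (f ∘ L) (f' (y - x)) 0 := by
    refine HasFDerivAt.comp_hasDerivAt (0 : ℝ) ?_ AffineMap.hasDerivAt_lineMap
    simpa [L] using hf'
  have hL0 : L 0 = x := AffineMap.lineMap_apply_zero x y
  have hL1 : L 1 = y := AffineMap.lineMap_apply_one x y
  have hslope := hline.lt_slope_of_hasDerivAt (x := 0) (y := 1) (by simpa [hL0])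
    (by simpa [hL1]) one_pos hderiv
  simp only [slope_def_field, Function.comp_apply, hL0, hL1, sub_zero, div_one] at hslope
  linarith

theorem StrictConvexOn.inner_gradient_pos_of_apply_sub_eq {E : Type*} [NormedAddCommGroup E]
    [InnerProductSpace ℝ E] [CompleteSpace E] {f : E → ℝ} {g x v : E}
    (hf : StrictConvexOn ℝ univ f) (hg : HasGradientAt f g x) (hv : v ≠ 0)
    (hfv : f (x - v) = f x) : 0 < ⟪v, g⟫ := by
  have htangent := hf.add_fderiv_lt (mem_univ x) (mem_univ (x - v))
    (Ne.symm (sub_eq_self.not.mpr hv)) hg.hasFDerivAt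
  rw [InnerProductSpace.toDual_apply_apply, sub_sub_cancel_left, inner_neg_right,
    real_inner_comm, hfv] at htangent
  linarith

theorem stmt_11_general (n : ℕ) (Δp : Finset (EuclideanSpace ℝ (Fin n)))
    (ρ : EuclideanSpace ℝ (Fin n) → ℝ) (hdiff : Differentiable ℝ ρ)
    (hsconv : StrictConvexOn ℝ Set.univ ρ)
    (hinv : ∀ l ∈ Δp, ∀ x, ρ (x - (2 * ⟪l, x⟫ / ‖l‖ ^ 2) • l) = ρ x) :
    ∀ x : EuclideanSpace ℝ (Fin n),
      (∀ l ∈ Δp, 0 < ⟪l, x⟫) → ∀ l ∈ Δp, 0 < ⟪l, gradient ρ x⟫ := by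
  intro x hx l hl
  have hl0 : l ≠ 0 := by
    rintro rfl
    simpa using hx 0 hl
  have hc : 0 < 2 * ⟪l, x⟫ / ‖l‖ ^ 2 := by
    have := hx l hl
    positivity
  have hpos := hsconv.inner_gradient_pos_of_apply_sub_eq (hdiff x).hasGradientAt
    (smul_ne_zero hc.ne' hl0) (hinv l hl x)
  rw [real_inner_smul_left] at hpos
  exact pos_of_mul_pos_right hpos hc.le

theorem stmt_11 (n : ℕ) (Δp : Finset (EuclideanSpace ℝ (Fin n)))
    (hΔ0 : ∀ l ∈ Δp, l ≠ 0)
    (ρ : EuclideanSpace ℝ (Fin n) → ℝ) (hdiff : Differentiable ℝ ρ)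
    (hsconv : StrictConvexOn ℝ Set.univ ρ)
    (hinv : ∀ l ∈ Δp, ∀ x, ρ (x - (2 * ⟪l, x⟫ / ‖l‖ ^ 2) • l) = ρ x) :
    ∀ x : EuclideanSpace ℝ (Fin n),
      (∀ l ∈ Δp, 0 < ⟪l, x⟫) → ∀ l ∈ Δp, 0 < ⟪l, gradient ρ x⟫ :=
  stmt_11_general n Δp ρ hdiff hsconv hinv
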